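/- Let G be a finite connected graph on at least three vertices that has a spanning subgraph which is a caterpillar tree. Then the square G^2 of G has a Hamilton cycle. -/

import Mathlib

open SimpleGraph

universe u w

/-- The square of a graph: join distinct vertices at distance at most 2. -/
def square {V : Type u} (G : SimpleGraph V) : SimpleGraph V where
  Adj u v := u ≠ v ∧ (G.Adj u v ∨ ∃ x, G.Adj u x ∧ G.Adj x v)
  symm := ⟨by
    rintro u v ⟨h, h' | ⟨x, h1, h2⟩⟩
    · exact ⟨h.symm, Or.inl h'.symm⟩
    · exact ⟨h.symm, Or.inr ⟨x, h2.symm, h1.symm⟩⟩⟩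
  loopless := ⟨fun u h => h.1 rfl⟩

/-- A caterpillar: a tree such that deleting all its leaves leaves a path
(possibly empty or a single vertex), i.e. the graph induced on the non-leaves is
connected (if nonempty), acyclic and of maximum degree at most 2. -/
def IsCaterpillar {V : Type u} (T : SimpleGraph V) : Prop :=
  T.IsTree ∧
    (T.induce {x | (T.neighborSet x).ncard ≠ 1}).Preconnected ∧
    (T.induce {x | (T.neighborSet x).ncard ≠ 1}).IsAcyclic ∧
    ∀ x, ((T.induce {x | (T.neighborSet x).ncard ≠ 1}).neighborSet x).ncard ≤ 2


/-!
The non-leaves of a caterpillar `T` (its spine) are the vertices of a path `v₁ v₂ … v_k` of `T`,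
and every leaf hangs on exactly one spine vertex (with at least three vertices, the neighbour of a
leaf is never a leaf). Writing `L(v)` for the leaves at `v`, set
`Z(v₁ … v_k) = v₁, reverse (Z(v₂ … v_k)), L(v₁)`. By induction on `k`, consecutive vertices of
`Z(v₁ … v_k)` are at distance at most two in `T`, and its last vertex is `v₁` or a neighbour of
`v₁`. So `Z` lists every vertex once and closes up to a Hamiltonian cycle of `T²`, which is a
subgraph of `G²`.
-/

theorem square_mono {V : Type*} {G H : SimpleGraph V} (h : G ≤ H) : square G ≤ square H := by
  rintro u v ⟨hne, huv | ⟨x, hux, hxv⟩⟩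
  exacts [⟨hne, .inl (h huv)⟩, ⟨hne, .inr ⟨x, h hux, h hxv⟩⟩]

namespace SimpleGraph

variable {V W : Type*}

theorem isHamiltonian_of_isChain [Fintype V] [DecidableEq V] {G : SimpleGraph V} {l : List V}
    (hne : l ≠ []) (hnd : l.Nodup) (hmem : ∀ v, v ∈ l) (h3 : 3 ≤ Fintype.card V)
    (hch : l.IsChain G.Adj) (hclose : G.Adj (l.getLast hne) (l.head hne)) : G.IsHamiltonian := by
  intro _
  have hp : (Walk.ofSupport l hne hch).IsPath := by
    rw [Walk.isPath_def, Walk.support_ofSupport]; exact hnd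
  have hcard : Fintype.card V = l.length := by
    simpa using (Fintype.card_congr (List.Nodup.getEquivOfForallMemList l hnd hmem)).symm
  refine ⟨_, .cons hclose (.ofSupport l hne hch), ?_⟩
  rw [Walk.isHamiltonianCycle_iff_isCycle_and_length_eq,
    Walk.isCycle_iff_isPath_tail_and_le_length, Walk.tail_cons]
  simp only [Walk.length_cons, Walk.length_ofSupport]
  exact ⟨⟨(Walk.isPath_copy _ _ _).2 hp, by omega⟩, by omega⟩

theorem Walk.IsPath.mem_support_of_forall_adj_mem [Finite W] {H : SimpleGraph W}
    (hconn : H.Preconnected) (hdeg : ∀ x, (H.neighborSet x).ncard ≤ 2) {u v : W}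
    {p : H.Walk u v} (hp : p.IsPath) (hu : ∀ y, H.Adj u y → y ∈ p.support)
    (hv : ∀ y, H.Adj v y → y ∈ p.support) (z : W) : z ∈ p.support := by
  by_contra hz
  obtain ⟨q⟩ := hconn u z
  obtain ⟨⟨⟨x, y⟩, hxy⟩, -, hx, hy⟩ :=
    q.exists_boundary_dart {x | x ∈ p.support} p.start_mem_support hz
  obtain ⟨i, rfl, hi⟩ := Walk.mem_support_iff_exists_getVert.1 hx
  obtain rfl | hi0 := Nat.eq_zero_or_pos i
  · exact hy (hu _ (by simpa using hxy))
  obtain rfl | hil := hi.eq_or_lt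
  · exact hy (hv _ (by simpa using hxy))
  -- an interior vertex of `p` with a neighbour off `p` would have degree three
  have hprev : H.Adj (p.getVert i) (p.getVert (i - 1)) := by
    simpa [Nat.sub_add_cancel hi0] using (p.adj_getVert_succ (i := i - 1) (by omega)).symm
  have hne : p.getVert (i - 1) ≠ p.getVert (i + 1) := fun h => by
    have := hp.getVert_injOn (by simp; omega) (by simp; omega) h
    omega
  have hoff : ∀ j, y ≠ p.getVert j := fun j h => hy (h ▸ p.getVert_mem_support j)
  have hsub : ({p.getVert (i - 1), p.getVert (i + 1), y} : Set W) ⊆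
      H.neighborSet (p.getVert i) := by
    rintro x (rfl | rfl | rfl)
    exacts [hprev, p.adj_getVert_succ hil, hxy]
  have := Set.ncard_le_ncard hsub (Set.toFinite _)
  rw [Set.ncard_eq_three.2 ⟨_, _, _, hne, (hoff _).symm, (hoff _).symm, rfl⟩] at this
  exact absurd (hdeg (p.getVert i)) (by omega)

theorem Preconnected.exists_isHamiltonian_walk [Finite W] [Nonempty W] [DecidableEq W]
    {H : SimpleGraph W} (hconn : H.Preconnected) (hdeg : ∀ x, (H.neighborSet x).ncard ≤ 2) :
    ∃ u v, ∃ p : H.Walk u v, p.IsHamiltonian := by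
  classical
  have := Fintype.ofFinite W
  obtain ⟨a⟩ := ‹Nonempty W›
  have : Nonempty (Σ u v, H.Path u v) := ⟨⟨a, a, Path.nil⟩⟩
  obtain ⟨⟨u, v, p, hp⟩, hmax⟩ := Finite.exists_max fun q : Σ u v, H.Path u v => q.2.2.1.length
  have hend : ∀ {a b} (q : H.Walk a b) (hq : q.IsPath), q.length = p.length →
      ∀ y, H.Adj a y → y ∈ q.support := by
    intro a b q hq hlen y hy
    by_contra hy'
    have := hmax ⟨y, b, .cons hy.symm q, hq.cons hy'⟩
    simp only [Walk.length_cons] at this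
    omega
  refine ⟨u, v, p, hp.isHamiltonian_of_mem (hp.mem_support_of_forall_adj_mem hconn hdeg
    (hend p hp rfl) fun y hy => ?_)⟩
  simpa using hend p.reverse hp.reverse (by simp) y hy

variable {T : SimpleGraph V}

def WithinTwo (T : SimpleGraph V) (a b : V) : Prop :=
  T.Adj a b ∨ ∃ z, T.Adj a z ∧ T.Adj z b

theorem WithinTwo.symm {a b : V} : T.WithinTwo a b → T.WithinTwo b a
  | .inl h => .inl h.symm
  | .inr ⟨z, haz, hzb⟩ => .inr ⟨z, hzb.symm, haz.symm⟩

theorem isChain_withinTwo_of_forall_adj {v : V} {l : List V} (hl : ∀ x ∈ l, T.Adj v x) :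
    l.IsChain T.WithinTwo :=
  List.Pairwise.isChain <| List.pairwise_of_forall_mem_list fun x hx y hy =>
    .inr ⟨v, (hl x hx).symm, hl y hy⟩

theorem isChain_square_adj_of_nodup {l : List V} (hnd : l.Nodup) (hl : l.IsChain T.WithinTwo) :
    l.IsChain (square T).Adj := by
  induction hl with
  | nil => exact .nil
  | singleton a => exact .singleton a
  | cons_cons hab _ ih =>
    obtain ⟨ha, hnd⟩ := List.nodup_cons.1 hnd
    exact .cons_cons ⟨fun h => ha (h ▸ List.mem_cons_self), hab⟩ (ih hnd)

def zigzag (leaves : V → List V) : List V → List V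
  | [] => []
  | v :: s => v :: ((zigzag leaves s).reverse ++ leaves v)

theorem zigzag_perm (leaves : V → List V) :
    ∀ s : List V, (zigzag leaves s).Perm (s.flatMap fun v => v :: leaves v)
  | [] => .nil
  | v :: s => by
    refine .cons v ?_
    refine ((List.reverse_perm _).append_right _).trans ?_
    refine ((zigzag_perm leaves s).append_right _).trans ?_
    exact List.perm_append_comm

theorem isChain_zigzag {leaves : V → List V} (hleaves : ∀ v, ∀ x ∈ leaves v, T.Adj v x) :
    ∀ {v : V} {s : List V}, (v :: s).IsChain T.Adj →
      (zigzag leaves (v :: s)).IsChain T.WithinTwo ∧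
        ∀ x ∈ (zigzag leaves (v :: s)).getLast?, x = v ∨ T.Adj x v
  | v, [], _ => by
    refine ⟨.cons (isChain_withinTwo_of_forall_adj (hleaves v)) fun y hy =>
      .inl (hleaves v y (List.mem_of_mem_head? (by simpa [zigzag] using hy))), fun x hx => ?_⟩
    rcases List.mem_cons.1 (List.mem_of_mem_getLast? hx) with rfl | hx
    exacts [.inl rfl, .inr (hleaves v x (by simpa [zigzag] using hx)).symm]
  | v, w :: s, hch => by
    obtain ⟨hvw, hch⟩ := List.isChain_cons_cons.1 hch
    obtain ⟨ih, hlast⟩ := isChain_zigzag hleaves hch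
    have hC : (zigzag leaves (w :: s)).head? = some w := rfl
    refine ⟨.cons (.append (List.isChain_reverse.2 (ih.imp fun _ _ h => h.symm))
      (isChain_withinTwo_of_forall_adj (hleaves v)) ?_) ?_, ?_⟩
    · intro x hx y hy
      rw [List.getLast?_reverse, hC, Option.mem_some_iff] at hx
      exact hx ▸ .inr ⟨v, hvw.symm, hleaves v y (List.mem_of_mem_head? hy)⟩
    · intro y hy
      rw [List.head?_append, List.head?_reverse] at hy
      obtain ⟨x, hx⟩ : ∃ x, (zigzag leaves (w :: s)).getLast? = some x :=
        ⟨_, List.getLast?_eq_some_getLast (List.cons_ne_nil _ _)⟩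
      rw [hx, Option.some_or, Option.mem_some_iff] at hy
      obtain rfl | hyw := hlast y (hy ▸ hx)
      exacts [.inl hvw, .inr ⟨w, hvw, hyw.symm⟩]
    · intro x hx
      simp only [zigzag, List.getLast?_cons, List.getLast?_append, List.getLast?_reverse,
        List.head?_cons, Option.mem_some_iff] at hx
      cases hL : (leaves v).getLast? with
      | none => simp only [hL, Option.none_or, Option.getD_some] at hx; exact .inr (hx ▸ hvw.symm)
      | some y =>
        simp only [hL, Option.some_or, Option.getD_some] at hx
        exact .inr (hx ▸ hleaves v y (List.mem_of_getLast? hL)).symm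

def spine (T : SimpleGraph V) : Set V := {x | (T.neighborSet x).ncard ≠ 1}

theorem exists_neighborSet_eq_singleton_of_notMem_spine {x : V} (hx : x ∉ T.spine) :
    ∃ a, T.neighborSet x = {a} :=
  Set.ncard_eq_one.1 (not_not.1 hx)

theorem eq_of_adj_of_notMem_spine {x v w : V} (hx : x ∉ T.spine) (hv : T.Adj x v)
    (hw : T.Adj x w) : v = w := by
  obtain ⟨a, ha⟩ := exists_neighborSet_eq_singleton_of_notMem_spine hx
  have hv : v ∈ T.neighborSet x := hv
  have hw : w ∈ T.neighborSet x := hw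
  rw [ha] at hv hw
  exact hv.trans hw.symm

theorem Connected.mem_spine_of_neighborSet_eq_singleton [Fintype V] (hT : T.Connected)
    (h3 : 3 ≤ Fintype.card V) {x a : V} (hx : T.neighborSet x = {a}) : a ∈ T.spine := by
  classical
  intro ha
  obtain ⟨b, hb⟩ := Set.ncard_eq_one.1 ha
  obtain rfl : x = b := by
    have hxa : T.Adj x a := by rw [← mem_neighborSet, hx]; exact Set.mem_singleton a
    have hax : x ∈ T.neighborSet a := hxa.symm
    rwa [hb] at hax
  have hall : ∀ z, z = x ∨ z = a := by
    intro z
    by_contra hz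
    obtain ⟨q⟩ := hT.preconnected x z
    obtain ⟨⟨⟨y, y'⟩, hyy'⟩, -, hy, hy'⟩ :=
      q.exists_boundary_dart {z | z = x ∨ z = a} (.inl rfl) hz
    have hy' : ¬(y' = x ∨ y' = a) := hy'
    have hyy' : y' ∈ T.neighborSet y := hyy'
    rcases hy with rfl | rfl
    · exact hy' (.inr (by rwa [hx] at hyy'))
    · exact hy' (.inl (by rwa [hb] at hyy'))
  have : Fintype.card V ≤ 2 :=
    calc Fintype.card V ≤ ({x, a} : Finset V).card :=
          Finset.card_le_card fun z _ => by simpa using hall z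
      _ ≤ 2 := Finset.card_le_two
  omega

theorem Connected.spine_nonempty [Fintype V] (hT : T.Connected) (h3 : 3 ≤ Fintype.card V) :
    T.spine.Nonempty := by
  obtain ⟨x⟩ := hT.nonempty
  by_cases hx : x ∈ T.spine
  · exact ⟨x, hx⟩
  · obtain ⟨a, ha⟩ := exists_neighborSet_eq_singleton_of_notMem_spine hx
    exact ⟨a, hT.mem_spine_of_neighborSet_eq_singleton h3 ha⟩

theorem _root_.IsCaterpillar.exists_spine_list [Fintype V] (hT : IsCaterpillar T)
    (h3 : 3 ≤ Fintype.card V) :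
    ∃ v s, (v :: s).Nodup ∧ (∀ x, x ∈ v :: s ↔ x ∈ T.spine) ∧ (v :: s).IsChain T.Adj := by
  classical
  obtain ⟨hTree, hconn, -, hdeg⟩ := hT
  have := (hTree.connected.spine_nonempty h3).to_subtype
  obtain ⟨u, _, p, hp⟩ :=
    Preconnected.exists_isHamiltonian_walk (H := T.induce T.spine) hconn hdeg
  refine ⟨u, p.support.tail.map Subtype.val, ?_⟩
  rw [← List.map_cons, Walk.cons_tail_support]
  refine ⟨hp.isPath.support_nodup.map Subtype.val_injective, fun x => ?_,
    (List.isChain_map _).2 p.isChain_adj_support⟩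
  simp only [List.mem_map]
  exact ⟨fun ⟨y, _, hy⟩ => hy ▸ y.2, fun hx => ⟨⟨x, hx⟩, hp.mem_support _, rfl⟩⟩

open Classical in
noncomputable def leavesAt [Fintype V] (T : SimpleGraph V) (v : V) : List V :=
  (Finset.univ.filter fun x => x ∉ T.spine ∧ T.Adj v x).toList

theorem mem_leavesAt [Fintype V] {v x : V} : x ∈ T.leavesAt v ↔ x ∉ T.spine ∧ T.Adj v x := by
  simp [leavesAt]

theorem nodup_flatMap_leavesAt [Fintype V] {s : List V} (hs : s.Nodup)
    (hspine : ∀ v ∈ s, v ∈ T.spine) : (s.flatMap fun v => v :: T.leavesAt v).Nodup := by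
  refine List.nodup_flatMap.2 ⟨fun v hv => List.nodup_cons.2
    ⟨fun h => (mem_leavesAt.1 h).1 (hspine v hv), Finset.nodup_toList _⟩,
    hs.pairwise_of_forall_ne fun v hv w hw hvw x hxv hxw => ?_⟩
  rcases List.mem_cons.1 hxv with rfl | hxv <;> rcases List.mem_cons.1 hxw with rfl | hxw
  · exact hvw rfl
  · exact (mem_leavesAt.1 hxw).1 (hspine _ hv)
  · exact (mem_leavesAt.1 hxv).1 (hspine _ hw)
  · exact hvw (eq_of_adj_of_notMem_spine (mem_leavesAt.1 hxv).1 (mem_leavesAt.1 hxv).2.symm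
      (mem_leavesAt.1 hxw).2.symm)

theorem Connected.mem_flatMap_leavesAt [Fintype V] (hT : T.Connected) (h3 : 3 ≤ Fintype.card V)
    {s : List V} (hspine : ∀ v ∈ T.spine, v ∈ s) (x : V) :
    x ∈ s.flatMap fun v => v :: T.leavesAt v := by
  rw [List.mem_flatMap]
  by_cases hx : x ∈ T.spine
  · exact ⟨x, hspine x hx, List.mem_cons_self⟩
  · obtain ⟨a, ha⟩ := exists_neighborSet_eq_singleton_of_notMem_spine hx
    have hxa : T.Adj x a := by rw [← mem_neighborSet, ha]; exact Set.mem_singleton a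
    exact ⟨a, hspine a (hT.mem_spine_of_neighborSet_eq_singleton h3 ha),
      List.mem_cons_of_mem _ (mem_leavesAt.2 ⟨hx, hxa.symm⟩)⟩

theorem _root_.IsCaterpillar.isHamiltonian_square [Fintype V] [DecidableEq V]
    (hT : IsCaterpillar T) (h3 : 3 ≤ Fintype.card V) : (square T).IsHamiltonian := by
  obtain ⟨v, s, hnd, hspine, hch⟩ := hT.exists_spine_list h3
  obtain ⟨hchain, hlast⟩ := isChain_zigzag (fun w x hx => (mem_leavesAt.1 hx).2) hch
  set l := zigzag T.leavesAt (v :: s)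
  have hperm := zigzag_perm T.leavesAt (v :: s)
  have hnd' : l.Nodup := hperm.nodup_iff.2 (nodup_flatMap_leavesAt hnd fun w => (hspine w).1)
  have hmem : ∀ x, x ∈ l := fun x =>
    hperm.mem_iff.2 (hT.1.connected.mem_flatMap_leavesAt h3 (fun w => (hspine w).2) x)
  have hne : l ≠ [] := List.cons_ne_nil _ _
  refine isHamiltonian_of_isChain hne hnd' hmem h3 (isChain_square_adj_of_nodup hnd' hchain) ?_
  obtain hv | hadj := hlast _ (List.getLast?_eq_some_getLast hne)
  · obtain ⟨y, hy⟩ := (hnd'.head_eq_getLast_iff hne).1 hv.symm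
    have : Fintype.card V ≤ 1 := Fintype.card_le_one_iff.2 fun a b => by
      have ha := hmem a
      have hb := hmem b
      rw [hy, List.mem_singleton] at ha hb
      rw [ha, hb]
    omega
  · exact ⟨hadj.ne, .inl hadj⟩

end SimpleGraph

theorem stmt_3_general {V : Type u} [Fintype V] [DecidableEq V] (G : SimpleGraph V)
    (h3 : 3 ≤ Fintype.card V) (hspan : ∃ T : SimpleGraph V, T ≤ G ∧ IsCaterpillar T) :
    (square G).IsHamiltonian := by
  obtain ⟨T, hTG, hT⟩ := hspan
  exact (hT.isHamiltonian_square h3).mono (square_mono hTG)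

/-- The square of a finite connected graph on at least three vertices
having a spanning caterpillar is Hamiltonian. -/
theorem stmt_3 {V : Type u} [Fintype V] [DecidableEq V] (G : SimpleGraph V) (hconn : G.Connected)
    (h3 : 3 ≤ Fintype.card V) (hspan : ∃ T : SimpleGraph V, T ≤ G ∧ IsCaterpillar T) :
    (square G).IsHamiltonian :=
  stmt_3_general G h3 hspan
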